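/- arXiv:2208.03645 — 2 statements merged into one kernel-verified Lean document; each statement's English description precedes it below -/
import Mathlib

section
/- Let p, q, k > 0 and define f : ℝ → ℝ by f(x) = -p·log(σ(x)) - k·q·log(1 - σ(x)), where σ is the logistic sigmoid. Then f attains its unique global minimum at x* = log(p/(k·q)). -/
/-!
Substituting `t = σ x` turns `f` into the binary cross entropy
`-p log t - k q log (1 - t)` on `(0, 1)`. By `log y < y - 1` (Gibbs' inequality) this is
uniquely minimised at `t = p / (p + k q)`, which is `σ (log (p / (k q)))`; since `σ` is
injective, the minimiser `x*` is unique too.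
-/

open Real

lemma sigmoid_log_div {a b : ℝ} (ha : 0 < a) (hb : 0 < b) :
    sigmoid (log (a / b)) = a / (a + b) := by
  rw [sigmoid_def, exp_neg, exp_log (div_pos ha hb)]
  field_simp

lemma neg_mul_log_sub_mul_log_one_sub_lt {p d t : ℝ} (hp : 0 < p) (hd : 0 < d)
    (ht₀ : 0 < t) (ht₁ : t < 1) (hne : t ≠ p / (p + d)) :
    -p * log (p / (p + d)) - d * log (1 - p / (p + d)) < -p * log t - d * log (1 - t) := by
  have hs : 0 < p + d := by linarith
  have h1t : 0 < 1 - t := by linarith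
  have hne' : t * (p + d) / p ≠ 1 := by
    rw [ne_eq, div_eq_one_iff_eq hp.ne', ← eq_div_iff hs.ne']
    exact hne
  have hlt : log (t * (p + d) / p) < t * (p + d) / p - 1 :=
    log_lt_sub_one_of_pos (by positivity) hne'
  have hle : log ((1 - t) * (p + d) / d) ≤ (1 - t) * (p + d) / d - 1 :=
    log_le_sub_one_of_pos (by positivity)
  -- weighted by `p` and `d`, the right-hand sides add up to `t (p + d) - p + (1 - t) (p + d) - d = 0`
  have hsum : p * log (t * (p + d) / p) + d * log ((1 - t) * (p + d) / d) < 0 := by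
    have e₁ : p * (t * (p + d) / p - 1) = t * (p + d) - p := by field_simp
    have e₂ : d * ((1 - t) * (p + d) / d - 1) = (1 - t) * (p + d) - d := by field_simp
    linarith [mul_lt_mul_of_pos_left hlt hp, mul_le_mul_of_nonneg_left hle hd.le]
  have hcompl : 1 - p / (p + d) = d / (p + d) := by field_simp; ring
  rw [hcompl, log_div hp.ne' hs.ne', log_div hd.ne' hs.ne']
  rw [log_div (by positivity) hp.ne', log_mul ht₀.ne' hs.ne',
    log_div (by positivity) hd.ne', log_mul h1t.ne' hs.ne'] at hsum
  linarith

/-- The pointwise NCE objective `f(x) = -p·log σ(x) - k·q·log(1-σ(x))` attains its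
unique global minimum at `x* = log(p/(k·q))`. -/
theorem stmt_1 (σ : ℝ → ℝ) (hσ : ∀ x, σ x = 1 / (1 + Real.exp (-x)))
    (p q k : ℝ) (hp : 0 < p) (hq : 0 < q) (hk : 0 < k)
    (f : ℝ → ℝ) (hf : ∀ x, f x = -p * Real.log (σ x) - k * q * Real.log (1 - σ x)) :
    (∀ x, f (Real.log (p / (k * q))) ≤ f x) ∧
    (∀ x, f x = f (Real.log (p / (k * q))) → x = Real.log (p / (k * q))) := by
  obtain rfl : σ = sigmoid := funext fun x => by rw [hσ, one_div, sigmoid_def]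
  have hkq : 0 < k * q := mul_pos hk hq
  have hmin := sigmoid_log_div hp hkq
  have hlt : ∀ x, sigmoid x ≠ p / (p + k * q) → f (log (p / (k * q))) < f x := fun x hne => by
    rw [hf, hf, hmin]
    exact neg_mul_log_sub_mul_log_one_sub_lt hp hkq (sigmoid_pos x) (sigmoid_lt_one x) hne
  refine ⟨fun x => ?_, fun x hx => ?_⟩
  · by_cases hx : sigmoid x = p / (p + k * q)
    · rw [hf, hf, hmin, hx]
    · exact (hlt x hx).le
  · by_contra hne
    refine (hlt x fun hx => hne (sigmoid_injective ?_)).ne' hx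
    rw [hx, hmin]
end

section
/- Let n ≥ 2, and let p = (p_1,…,p_n) be a probability vector with all p_i > 0. For α ≥ 0 define the escort distribution p^{(α)}_i = p_i^α / Σ_j p_j^α. Then the map α ↦ max_i p^{(α)}_i is monotone nondecreasing on [0, ∞). -/
/-!
At a most likely item `i` every ratio `p j / p i` lies in `(0, 1]`, so
`p^{(α)}_i = (∑ j, (p j / p i) ^ α)⁻¹` is nondecreasing in `α`. For `α ≥ 0` the map `x ↦ x ^ α`
is monotone, so this same `i` carries the maximal escort mass, and the maximum is `p^{(α)}_i`.
-/

open Finset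

noncomputable def escort {ι : Type*} [Fintype ι] (p : ι → ℝ) (α : ℝ) (i : ι) : ℝ :=
  p i ^ α / ∑ j, p j ^ α

section Escort

variable {ι : Type*} [Fintype ι] {p : ι → ℝ}

theorem escort_eq_inv_sum_rpow_div (hp : ∀ i, 0 < p i) (α : ℝ) (i : ι) :
    escort p α i = (∑ j, (p j / p i) ^ α)⁻¹ := by
  simp only [escort, Real.div_rpow (hp _).le (hp i).le, ← Finset.sum_div, inv_div]

theorem escort_le_escort (hp : ∀ i, 0 < p i) {α : ℝ} (hα : 0 ≤ α) {i j : ι}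
    (hij : p j ≤ p i) : escort p α j ≤ escort p α i :=
  div_le_div_of_nonneg_right (Real.rpow_le_rpow (hp j).le hij hα)
    (sum_nonneg fun k _ => (Real.rpow_pos_of_pos (hp k) α).le)

theorem iSup_escort_eq_of_forall_le (hp : ∀ i, 0 < p i) {α : ℝ} (hα : 0 ≤ α) {i : ι}
    (hmax : ∀ j, p j ≤ p i) : ⨆ j, escort p α j = escort p α i :=
  have : Nonempty ι := ⟨i⟩
  le_antisymm (ciSup_le fun j => escort_le_escort hp hα (hmax j))
    (le_ciSup (Set.finite_range _).bddAbove i)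

theorem monotone_escort_of_forall_le (hp : ∀ i, 0 < p i) {i : ι} (hmax : ∀ j, p j ≤ p i) :
    Monotone fun α => escort p α i := by
  intro a b hab
  simp only [escort_eq_inv_sum_rpow_div hp]
  have hpos : ∀ c : ℝ, 0 < ∑ j, (p j / p i) ^ c := fun c =>
    sum_pos (fun j _ => Real.rpow_pos_of_pos (div_pos (hp j) (hp i)) c) ⟨i, mem_univ i⟩
  refine inv_anti₀ (hpos b) (sum_le_sum fun j _ => ?_)
  exact Real.rpow_le_rpow_of_exponent_ge (div_pos (hp j) (hp i))
    (div_le_one_of_le₀ (hmax j) (hp i).le) hab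

theorem monotoneOn_iSup_escort (hp : ∀ i, 0 < p i) :
    MonotoneOn (fun α => ⨆ i, escort p α i) (Set.Ici 0) := by
  cases isEmpty_or_nonempty ι
  · simp only [iSup_of_empty']
    exact monotoneOn_const
  · obtain ⟨i, hmax⟩ := Finite.exists_max p
    intro a ha b hb hab
    simp only [iSup_escort_eq_of_forall_le hp ha hmax, iSup_escort_eq_of_forall_le hp hb hmax]
    exact monotone_escort_of_forall_le hp hmax hab

end Escort

open Finset in
theorem stmt_19_general (n : ℕ) (p : Fin n → ℝ)
    (hpos : ∀ i, 0 < p i)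
    (P : ℝ → Fin n → ℝ)
    (hP : ∀ α i, P α i = (p i) ^ α / ∑ j, (p j) ^ α) :
    MonotoneOn (fun α => ⨆ i, P α i) (Set.Ici (0:ℝ)) := by
  obtain rfl : P = escort p := funext₂ hP
  exact monotoneOn_iSup_escort hpos

open Finset in
/-- For a positive probability vector `p` on `Fin n` (`n ≥ 2`), the maximal mass of
the escort distribution `p^{(α)}_i = p_i^α / Σ_j p_j^α` is nondecreasing in `α ≥ 0`. -/
theorem stmt_19 (n : ℕ) (hn : 2 ≤ n) (p : Fin n → ℝ)
    (hpos : ∀ i, 0 < p i) (hsum : ∑ i, p i = 1)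
    (P : ℝ → Fin n → ℝ)
    (hP : ∀ α i, P α i = (p i) ^ α / ∑ j, (p j) ^ α) :
    MonotoneOn (fun α => ⨆ i, P α i) (Set.Ici (0:ℝ)) :=
  stmt_19_general n p hpos P hP
end
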